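/- Let 𝒜 = (A, Σ, δ, ρ) be an invertible Mealy automaton, and for each k ≥ 0 let G_k be the group of permutations of Σ^k generated by the restrictions of the extended production functions ρ_x (x ∈ A) to words of length k. If #G_k = #G_{k+1} for some k, then the group ⟨𝒜⟩ generated by 𝒜 is finite and has order #G_k; more precisely, restriction to Σ^k induces a group isomorphism from ⟨𝒜⟩ onto G_k. -/

import Mathlib

/-- A Mealy automaton `(A, Σ, δ, ρ)` with stateset `A` and alphabet `X`:
`δ i : A → A` for each letter `i ∈ X`, and `ρ x : X → X` for each state `x ∈ A`. -/
structure Mealy (A X : Type*) where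
  δ : X → A → A
  ρ : A → X → X

namespace Mealy

variable {A X : Type*}

/-- The extended production function `ρ_x : Σ* → Σ*`, defined by
`ρ_x(ε) = ε` and `ρ_x(i·v) = ρ_x(i)·ρ_{δ_i(x)}(v)`. -/
def run (M : Mealy A X) : A → List X → List X
  | _, [] => []
  | x, i :: v => M.ρ x i :: run M (M.δ i x) v

end Mealy

namespace Mealy

variable {A X : Type*}

/-- The state reached after reading a word. -/
def finalState (M : Mealy A X) : A → List X → A
  | x, [] => x
  | x, i :: u => finalState M (M.δ i x) u

lemma run_length (M : Mealy A X) (x : A) (u : List X) :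
    (M.run x u).length = u.length := by
  induction u generalizing x with
  | nil => rfl
  | cons i v ih => simp [Mealy.run, ih]

lemma run_append (M : Mealy A X) (x : A) (u v : List X) :
    M.run x (u ++ v) = M.run x u ++ M.run (M.finalState x u) v := by
  induction u generalizing x with
  | nil => rfl
  | cons i u ih => simp [Mealy.run, finalState, ih]

end Mealy

/-- Restriction of a group of length-preserving permutations of `List X` to a
permutation group of the words of a fixed length. -/
def mealyRestrictHom {X : Type*} (n : ℕ) (G : Subgroup (Equiv.Perm (List X)))
    (hG : ∀ σ ∈ G, ∀ u : List X, (σ u).length = u.length) :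
    ↥G →* Equiv.Perm {u : List X // u.length = n} :=
  MonoidHom.mk' (fun σ => Equiv.Perm.subtypePerm σ.1 (fun u => by
      constructor
      · intro h; rw [hG σ.1 σ.2 u] at h; exact h
      · intro h; rw [hG σ.1 σ.2]; exact h))
    (by
      intro a b
      ext u
      rfl)

lemma mealyRestrictHom_apply {X : Type*} (n : ℕ) (G : Subgroup (Equiv.Perm (List X)))
    (hG : ∀ σ ∈ G, ∀ u : List X, (σ u).length = u.length) (σ : ↥G)
    (u : {u : List X // u.length = n}) :
    ((mealyRestrictHom n G hG σ) u).1 = σ.1 u.1 := rfl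

/-- let `𝒜` be an invertible Mealy automaton.  Its extended production
functions are bijections of `Σ*`, given as permutations `e x` (`⇑(e x) = ρ_x`); for
each `k` they preserve `Σ^k` and restrict to permutations `f x` of `Σ^k`
(`(f x u).1 = ρ_x(u)`), resp. `g x` of `Σ^{k+1}`.  Let `G_k` (resp. `G_{k+1}`) be the
group of permutations of `Σ^k` (resp. `Σ^{k+1}`) generated by these restrictions, and
`⟨𝒜⟩` the group of bijections of `Σ*` generated by the `ρ_x`.  If `#G_k = #G_{k+1}`,
then `⟨𝒜⟩` is finite of order `#G_k`; more precisely, restriction to `Σ^k` induces a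
group isomorphism from `⟨𝒜⟩` onto `G_k`. -/
theorem mealy_levelOfFaithfulAction_group {A X : Type*} [Fintype A] [Fintype X]
    [Nonempty A] [Nonempty X] (M : Mealy A X)
    (hinv : ∀ x : A, Function.Bijective (M.ρ x))
    (e : A → Equiv.Perm (List X)) (he : ∀ x : A, ⇑(e x) = M.run x)
    (k : ℕ)
    (f : A → Equiv.Perm {u : List X // u.length = k})
    (hf : ∀ (x : A) (u : {u : List X // u.length = k}), (f x u).1 = M.run x u.1)
    (g : A → Equiv.Perm {u : List X // u.length = k + 1})
    (hg : ∀ (x : A) (u : {u : List X // u.length = k + 1}), (g x u).1 = M.run x u.1)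
    (hcard : Nat.card ↥(Subgroup.closure (Set.range f)) =
             Nat.card ↥(Subgroup.closure (Set.range g))) :
    Finite ↥(Subgroup.closure (Set.range e)) ∧
    Nat.card ↥(Subgroup.closure (Set.range e)) =
      Nat.card ↥(Subgroup.closure (Set.range f)) ∧
    ∃ φ : ↥(Subgroup.closure (Set.range e)) ≃* ↥(Subgroup.closure (Set.range f)),
      ∀ (σ : ↥(Subgroup.closure (Set.range e))) (u : {u : List X // u.length = k}),
        ((φ σ : Equiv.Perm {u : List X // u.length = k}) u).1 =
          (σ : Equiv.Perm (List X)) u.1 := by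
  classical
  set H := Subgroup.closure (Set.range e) with hHdef
  obtain ⟨x0⟩ := ‹Nonempty X›
  -- every element of H preserves length
  have hlen : ∀ σ ∈ H, ∀ u : List X, (σ u).length = u.length := by
    intro σ hσ
    induction hσ using Subgroup.closure_induction with
    | mem x hx =>
      obtain ⟨a, rfl⟩ := hx
      intro u; rw [he a]; exact M.run_length a u
    | one => intro u; rfl
    | mul a b ha hb pa pb =>
      intro u
      have := (pa (b u)).trans (pb u)
      simpa [Equiv.Perm.mul_apply] using this
    | inv a ha pa =>
      intro u
      have h := pa (a⁻¹ u)
      rw [Equiv.Perm.coe_inv, Equiv.apply_symm_apply] at h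
      exact h.symm
  -- prefix property
  have hpre : ∀ σ ∈ H, ∀ u v : List X, ∃ w, σ (u ++ v) = σ u ++ w := by
    intro σ hσ
    induction hσ using Subgroup.closure_induction with
    | mem x hx =>
      obtain ⟨a, rfl⟩ := hx
      intro u v
      rw [he a]
      exact ⟨_, M.run_append a u v⟩
    | one => intro u v; exact ⟨v, rfl⟩
    | mul a b ha hb pa pb =>
      intro u v
      obtain ⟨w, hw⟩ := pb u v
      obtain ⟨w', hw'⟩ := pa (b u) w
      exact ⟨w', by simp [Equiv.Perm.mul_apply, hw, hw']⟩
    | inv a ha pa =>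
      intro u v
      set z := a⁻¹ (u ++ v) with hz
      have hz2 : a z = u ++ v := Equiv.apply_symm_apply a (u ++ v)
      obtain ⟨w, hw⟩ := pa (z.take u.length) (z.drop u.length)
      rw [List.take_append_drop] at hw
      have hlz : (a (z.take u.length)).length = u.length := by
        rw [hlen a ha, List.length_take]
        have hzl : z.length = u.length + v.length := by
          rw [hz, hlen a⁻¹ (inv_mem ha), List.length_append]
        omega
      have h2 : a (z.take u.length) = u := (List.append_inj (hw.symm.trans hz2) hlz).1
      have h3 : a⁻¹ u = z.take u.length := by
        conv_lhs => rw [← h2]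
        rw [Equiv.Perm.coe_inv, Equiv.symm_apply_apply]
      refine ⟨z.drop u.length, ?_⟩
      rw [h3, List.take_append_drop]
  -- sections (self-similarity)
  have hsec : ∀ σ ∈ H, ∀ i : X,
      ∃ (j : X) (τ : Equiv.Perm (List X)), τ ∈ H ∧ ∀ v : List X, σ (i :: v) = j :: τ v := by
    intro σ hσ
    induction hσ using Subgroup.closure_induction with
    | mem x hx =>
      obtain ⟨a, rfl⟩ := hx
      intro i
      refine ⟨M.ρ a i, e (M.δ i a), Subgroup.subset_closure ⟨_, rfl⟩, fun v => ?_⟩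
      rw [he a, he (M.δ i a)]
      rfl
    | one => intro i; exact ⟨i, 1, one_mem _, fun v => rfl⟩
    | mul a b ha hb pa pb =>
      intro i
      obtain ⟨j, τ, hτ, hjτ⟩ := pb i
      obtain ⟨j', τ', hτ', hjτ'⟩ := pa j
      refine ⟨j', τ' * τ, mul_mem hτ' hτ, fun v => ?_⟩
      rw [Equiv.Perm.mul_apply, hjτ, hjτ', Equiv.Perm.mul_apply]
    | inv a ha pa =>
      choose hd τ hτH hτ using pa
      have hhd : ∀ j : X, a [j] = [hd j] := by
        intro j
        have h0 := hτ j []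
        have hτnil : τ j [] = [] := List.length_eq_zero_iff.1 (hlen (τ j) (hτH j) [])
        rw [hτnil] at h0
        exact h0
      have hinj : Function.Injective hd := by
        intro j j' hjj'
        have h1 : a [j] = a [j'] := by rw [hhd, hhd, hjj']
        simpa using a.injective h1
      have hsurj : Function.Surjective hd := Finite.injective_iff_surjective.1 hinj
      intro i
      obtain ⟨j, rfl⟩ := hsurj i
      refine ⟨j, (τ j)⁻¹, inv_mem (hτH j), fun v => ?_⟩
      apply a.injective
      rw [Equiv.Perm.coe_inv, Equiv.apply_symm_apply, hτ j, Equiv.Perm.coe_inv, Equiv.apply_symm_apply]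
  -- shorter words: triviality descends
  have hlow : ∀ σ ∈ H, ∀ m : ℕ,
      (∀ u : List X, u.length = m → σ u = u) →
      ∀ u : List X, u.length ≤ m → σ u = u := by
    intro σ hσ m hm u hu
    obtain ⟨w, hw⟩ := hpre σ hσ u (List.replicate (m - u.length) x0)
    have hlp : (u ++ List.replicate (m - u.length) x0).length = m := by
      simp; omega
    have h1 := hm _ hlp
    rw [hw] at h1
    exact (List.append_inj h1 (hlen σ hσ u)).1
  -- the two restriction homomorphisms
  set Φ := mealyRestrictHom k H hlen with hΦdef
  set Φ' := mealyRestrictHom (k + 1) H hlen with hΦ'def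
  have happ : ∀ (σ : ↥H) (u : {u : List X // u.length = k}), ((Φ σ) u).1 = σ.1 u.1 :=
    fun σ u => rfl
  have happ' : ∀ (σ : ↥H) (u : {u : List X // u.length = k + 1}), ((Φ' σ) u).1 = σ.1 u.1 :=
    fun σ u => rfl
  -- kernel membership in terms of pointwise triviality
  have hker1 : ∀ (σ : ↥H), Φ σ = 1 ↔ ∀ u : List X, u.length = k → σ.1 u = u := by
    intro σ
    constructor
    · intro h u hu
      have h2 := congrArg
        (fun π : Equiv.Perm {u : List X // u.length = k} => ((π ⟨u, hu⟩ : _) : List X)) h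
      simpa [happ] using h2
    · intro h
      refine Equiv.ext fun u => ?_
      rw [Equiv.Perm.one_apply]
      exact Subtype.ext ((happ σ u).trans (h u.1 u.2))
  have hker1' : ∀ (σ : ↥H), Φ' σ = 1 ↔ ∀ u : List X, u.length = k + 1 → σ.1 u = u := by
    intro σ
    constructor
    · intro h u hu
      have h2 := congrArg
        (fun π : Equiv.Perm {u : List X // u.length = k + 1} => ((π ⟨u, hu⟩ : _) : List X)) h
      simpa [happ'] using h2
    · intro h
      refine Equiv.ext fun u => ?_
      rw [Equiv.Perm.one_apply]
      exact Subtype.ext ((happ' σ u).trans (h u.1 u.2))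
  -- generators map to generators
  have hΦe : ∀ (x : A) (h : e x ∈ H), Φ ⟨e x, h⟩ = f x := by
    intro x h
    refine Equiv.ext fun u => Subtype.ext ?_
    rw [happ ⟨e x, h⟩ u, hf x u]
    show (e x) u.1 = M.run x u.1
    rw [he x]
  have hΦ'e : ∀ (x : A) (h : e x ∈ H), Φ' ⟨e x, h⟩ = g x := by
    intro x h
    refine Equiv.ext fun u => Subtype.ext ?_
    rw [happ' ⟨e x, h⟩ u, hg x u]
    show (e x) u.1 = M.run x u.1
    rw [he x]
  -- ranges
  have hrange : Φ.range = Subgroup.closure (Set.range f) := by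
    apply le_antisymm
    · rintro _ ⟨σ, rfl⟩
      obtain ⟨s, hs⟩ := σ
      induction hs using Subgroup.closure_induction with
      | mem x hx =>
        obtain ⟨a, rfl⟩ := hx
        rw [hΦe a _]
        exact Subgroup.subset_closure ⟨a, rfl⟩
      | one =>
        show Φ 1 ∈ _
        rw [map_one]; exact one_mem _
      | mul a b ha hb pa pb =>
        show Φ (⟨a, ha⟩ * ⟨b, hb⟩) ∈ _
        rw [map_mul]; exact mul_mem pa pb
      | inv a ha pa =>
        show Φ (⟨a, ha⟩)⁻¹ ∈ _
        rw [map_inv]; exact inv_mem pa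
    · rw [Subgroup.closure_le]
      rintro _ ⟨x, rfl⟩
      exact ⟨⟨e x, Subgroup.subset_closure ⟨x, rfl⟩⟩, hΦe x _⟩
  have hrange' : Φ'.range = Subgroup.closure (Set.range g) := by
    apply le_antisymm
    · rintro _ ⟨σ, rfl⟩
      obtain ⟨s, hs⟩ := σ
      induction hs using Subgroup.closure_induction with
      | mem x hx =>
        obtain ⟨a, rfl⟩ := hx
        rw [hΦ'e a _]
        exact Subgroup.subset_closure ⟨a, rfl⟩
      | one =>
        show Φ' 1 ∈ _
        rw [map_one]; exact one_mem _
      | mul a b ha hb pa pb =>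
        show Φ' (⟨a, ha⟩ * ⟨b, hb⟩) ∈ _
        rw [map_mul]; exact mul_mem pa pb
      | inv a ha pa =>
        show Φ' (⟨a, ha⟩)⁻¹ ∈ _
        rw [map_inv]; exact inv_mem pa
    · rw [Subgroup.closure_le]
      rintro _ ⟨x, rfl⟩
      exact ⟨⟨e x, Subgroup.subset_closure ⟨x, rfl⟩⟩, hΦ'e x _⟩
  -- finiteness of the level permutation groups
  haveI : Finite {u : List X // u.length = k} := (List.finite_length_eq X k).to_subtype
  haveI : Finite {u : List X // u.length = k + 1} := (List.finite_length_eq X (k + 1)).to_subtype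
  haveI : Nonempty ↥(Subgroup.closure (Set.range f)) := ⟨1⟩
  -- kernel comparison
  have hker_le : Φ'.ker ≤ Φ.ker := by
    intro σ hσ
    rw [MonoidHom.mem_ker] at hσ ⊢
    rw [hker1]
    intro u hu
    exact hlow σ.1 σ.2 (k + 1) ((hker1' σ).1 hσ) u (by omega)
  have hidx : Φ.ker.index = Nat.card ↥(Subgroup.closure (Set.range f)) := by
    rw [Subgroup.index_ker, hrange]
  have hidx' : Φ'.ker.index = Nat.card ↥(Subgroup.closure (Set.range g)) := by
    rw [Subgroup.index_ker, hrange']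
  have hcpos : 0 < Nat.card ↥(Subgroup.closure (Set.range f)) := Nat.card_pos
  have hkk : Φ.ker ≤ Φ'.ker := by
    have h1 := Subgroup.relIndex_mul_index hker_le
    rw [hidx, hidx', ← hcard] at h1
    have h2 : Φ'.ker.relIndex Φ.ker = 1 :=
      Nat.eq_of_mul_eq_mul_right hcpos (by rw [one_mul]; exact h1)
    exact Subgroup.relIndex_eq_one.mp h2
  have hKE : ∀ σ : ↥H, (∀ u : List X, u.length = k → σ.1 u = u) →
      ∀ u : List X, u.length = k + 1 → σ.1 u = u := by
    intro σ h
    have h1 : σ ∈ Φ.ker := by rw [MonoidHom.mem_ker, hker1]; exact h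
    have h2 : σ ∈ Φ'.ker := hkk h1
    rw [MonoidHom.mem_ker, hker1'] at h2
    exact h2
  -- triviality propagates upwards through all levels
  have hup : ∀ d : ℕ, ∀ σ : ↥H, (∀ u : List X, u.length = k → σ.1 u = u) →
      ∀ u : List X, u.length = k + d → σ.1 u = u := by
    intro d
    induction d with
    | zero => intro σ h u hu; exact h u hu
    | succ d ih =>
      intro σ h u hu
      have h1 : ∀ u : List X, u.length = k + 1 → σ.1 u = u := hKE σ h
      cases u with
      | nil => simp at hu
      | cons i v =>
        obtain ⟨j, τ, hτ, hjτ⟩ := hsec σ.1 σ.2 i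
        have hji : j = i := by
          have h2 := h1 (i :: List.replicate k x0) (by simp)
          rw [hjτ, List.cons_eq_cons] at h2
          exact h2.1
        have hτtriv : ∀ w : List X, w.length = k → τ w = w := by
          intro w hw
          have h2 := h1 (i :: w) (by simp [hw])
          rw [hjτ, List.cons_eq_cons] at h2
          exact h2.2
        have hvlen : v.length = k + d := by
          simp at hu; omega
        have h3 := ih ⟨τ, hτ⟩ hτtriv v hvlen
        rw [hjτ, hji, h3]
  -- injectivity of Φ
  have hinjΦ : Function.Injective Φ := by
    rw [injective_iff_map_eq_one]
    intro σ hσ1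
    have hk0 : ∀ u : List X, u.length = k → σ.1 u = u := (hker1 σ).1 hσ1
    have hσ1' : σ.1 = 1 := by
      refine Equiv.ext fun u => ?_
      rw [Equiv.Perm.one_apply]
      rcases le_or_gt u.length k with h | h
      · exact hlow σ.1 σ.2 k hk0 u h
      · exact hup (u.length - k) σ hk0 u (by omega)
    exact Subtype.ext hσ1'
  -- assemble
  have hmem : ∀ σ : ↥H, Φ σ ∈ Subgroup.closure (Set.range f) := by
    intro σ
    have : Φ σ ∈ Φ.range := ⟨σ, rfl⟩
    rwa [hrange] at this
  have hbij : Function.Bijective (Φ.codRestrict (Subgroup.closure (Set.range f)) hmem) := by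
    constructor
    · intro a b hab
      exact hinjΦ (congrArg Subtype.val hab)
    · intro y
      have hy : (y : Equiv.Perm {u : List X // u.length = k}) ∈ Φ.range := by
        rw [hrange]; exact y.2
      obtain ⟨σ, hσ⟩ := hy
      exact ⟨σ, Subtype.ext hσ⟩
  haveI hfinH : Finite ↥H := Finite.of_injective _ hinjΦ
  refine ⟨hfinH, ?_, ?_⟩
  · exact Nat.card_congr
      (MulEquiv.ofBijective (Φ.codRestrict (Subgroup.closure (Set.range f)) hmem) hbij).toEquiv
  · exact ⟨MulEquiv.ofBijective (Φ.codRestrict (Subgroup.closure (Set.range f)) hmem) hbij,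
      fun σ u => rfl⟩
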